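/- arXiv:1512.06081 — 7 statements merged into one kernel-verified Lean document; each statement's English description precedes it below -/
import Mathlib

section
/- The scalarization f is strictly monotone with respect to the strict cone order induced by C: for all y, w ∈ ℝ^m, if w − y ∈ interior C (i.e. y ≺_C w) then f(y) < f(w). -/
open RealInnerProductSpace

/-- The scalarization `f y = sup_{z ∈ Z} ⟪y,z⟫ / ⟪e,z⟫` is strictly monotone with respect
to the strict order induced by the cone `C = {y : ∀ z ∈ Z, ⟪y,z⟫ ≥ 0}`:
if `w - y ∈ interior C` then `f y < f w`. -/
theorem scalarization_strictly_monotone {m : ℕ} (hm : 1 ≤ m)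
    (Z : Set (EuclideanSpace ℝ (Fin m))) (hZne : Z.Nonempty) (hZcomp : IsCompact Z)
    (hZ0 : (0 : EuclideanSpace ℝ (Fin m)) ∉ Z)
    (C : Set (EuclideanSpace ℝ (Fin m)))
    (hC : C = {y : EuclideanSpace ℝ (Fin m) | ∀ z ∈ Z, 0 ≤ ⟪y, z⟫})
    (e : EuclideanSpace ℝ (Fin m)) (he : ∀ z ∈ Z, 0 < ⟪e, z⟫)
    (f : EuclideanSpace ℝ (Fin m) → ℝ)
    (hf : ∀ y, f y = sSup ((fun z => ⟪y, z⟫ / ⟪e, z⟫) '' Z))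
    (y w : EuclideanSpace ℝ (Fin m)) (hyw : w - y ∈ interior C) :
    f y < f w := by
  have hne : ∀ z ∈ Z, ⟪e, z⟫ ≠ 0 := fun z hz => (he z hz).ne'
  have contg : ContinuousOn (fun z : EuclideanSpace ℝ (Fin m) => ⟪y, z⟫ / ⟪e, z⟫) Z :=
    ((continuous_const.inner continuous_id).continuousOn).div
      ((continuous_const.inner continuous_id).continuousOn) hne
  have conth : ContinuousOn (fun z : EuclideanSpace ℝ (Fin m) => ⟪w, z⟫ / ⟪e, z⟫) Z :=
    ((continuous_const.inner continuous_id).continuousOn).div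
      ((continuous_const.inner continuous_id).continuousOn) hne
  obtain ⟨z₀, hz₀, hmax⟩ := hZcomp.exists_isMaxOn hZne contg
  have hfy : f y = ⟪y, z₀⟫ / ⟪e, z₀⟫ := by
    rw [hf]
    refine IsGreatest.csSup_eq ⟨Set.mem_image_of_mem _ hz₀, ?_⟩
    rintro _ ⟨z, hz, rfl⟩
    exact hmax hz
  -- strict positivity of ⟪w - y, z₀⟫
  obtain ⟨ε, hε, hball⟩ := Metric.mem_nhds_iff.mp (mem_interior_iff_mem_nhds.mp hyw)
  have hz₀0 : z₀ ≠ 0 := fun h => hZ0 (h ▸ hz₀)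
  have hz₀n : 0 < ‖z₀‖ := norm_pos_iff.mpr hz₀0
  set c : ℝ := ε / 2 / ‖z₀‖ with hc
  have hcpos : 0 < c := by positivity
  have hv : (w - y) - c • z₀ ∈ C := by
    apply hball
    simp only [Metric.mem_ball, dist_eq_norm]
    have : (w - y) - c • z₀ - (w - y) = -(c • z₀) := by abel
    rw [this, norm_neg, norm_smul, Real.norm_eq_abs, abs_of_pos hcpos, hc,
      div_mul_cancel₀ _ hz₀n.ne']
    linarith
  have hip : 0 < ⟪w - y, z₀⟫ := by
    rw [hC] at hv
    have h0 := hv z₀ hz₀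
    rw [inner_sub_left, inner_smul_left] at h0
    simp only [starRingEnd_apply, star_trivial] at h0
    have hzz : 0 < c * ⟪z₀, z₀⟫ := by
      have h2 := real_inner_self_eq_norm_sq z₀
      rw [h2]; positivity
    linarith
  have hfw : ⟪w, z₀⟫ / ⟪e, z₀⟫ ≤ f w := by
    rw [hf]
    exact le_csSup (hZcomp.image_of_continuousOn conth).bddAbove
      (Set.mem_image_of_mem _ hz₀)
  calc f y = ⟪y, z₀⟫ / ⟪e, z₀⟫ := hfy
    _ < ⟪w, z₀⟫ / ⟪e, z₀⟫ := by
        rw [inner_sub_left] at hip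
        exact div_lt_div_of_pos_right (by linarith) (he z₀ hz₀)
    _ ≤ f w := hfw
end

section
/- Let X be any nonempty set (type), S ⊆ X, and F : X → ℝ^m. If p* ∈ S minimizes the scalarized function over S, i.e. f(F(p*)) ≤ f(F(p)) for every p ∈ S, then p* is a weakly efficient point of F on S: there is no p ∈ S with F(p) ≺_C F(p*), i.e. no p ∈ S with F(p*) − F(p) ∈ interior C. -/
open RealInnerProductSpace

/-- If `p* ∈ S` minimizes the scalarization `f ∘ F` over `S`, then `p*` is a weakly
efficient point of `F` on `S`: there is no `p ∈ S` with `F p ≺_C F p*`, i.e. no `p ∈ S`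
with `F p* - F p ∈ interior C`. -/
theorem scalar_minimizer_weakly_efficient {m : ℕ} (hm : 1 ≤ m)
    (Z : Set (EuclideanSpace ℝ (Fin m))) (hZne : Z.Nonempty) (hZcomp : IsCompact Z)
    (hZ0 : (0 : EuclideanSpace ℝ (Fin m)) ∉ Z)
    (C : Set (EuclideanSpace ℝ (Fin m)))
    (hC : C = {y : EuclideanSpace ℝ (Fin m) | ∀ z ∈ Z, 0 ≤ ⟪y, z⟫})
    (e : EuclideanSpace ℝ (Fin m)) (he : ∀ z ∈ Z, 0 < ⟪e, z⟫)
    (f : EuclideanSpace ℝ (Fin m) → ℝ)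
    (hf : ∀ y, f y = sSup ((fun z => ⟪y, z⟫ / ⟪e, z⟫) '' Z))
    {X : Type*} [Nonempty X] (S : Set X) (F : X → EuclideanSpace ℝ (Fin m))
    (pstar : X) (hpstar : pstar ∈ S)
    (hmin : ∀ p ∈ S, f (F pstar) ≤ f (F p)) :
    ¬ ∃ p ∈ S, F pstar - F p ∈ interior C := by
  rintro ⟨p, hpS, hint⟩
  set d := F pstar - F p with hd
  -- strict positivity of ⟨d, z⟩ for z ∈ Z
  have hdpos : ∀ z ∈ Z, 0 < ⟪d, z⟫ := by
    intro z hz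
    have hz0 : z ≠ 0 := fun h => hZ0 (h ▸ hz)
    have hznorm : 0 < ‖z‖ := norm_pos_iff.mpr hz0
    obtain ⟨ε, hε, hball⟩ := Metric.isOpen_iff.mp isOpen_interior d hint
    have hmem : d - (ε / (2 * ‖z‖)) • z ∈ C := by
      apply interior_subset
      apply hball
      rw [Metric.mem_ball, dist_eq_norm]
      have : d - (ε / (2 * ‖z‖)) • z - d = -((ε / (2 * ‖z‖)) • z) := by abel
      rw [this, norm_neg, norm_smul, Real.norm_eq_abs,
        abs_of_pos (by positivity)]
      rw [div_mul_eq_mul_div, mul_comm (2:ℝ) ‖z‖, ← div_div,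
        mul_div_assoc, div_self (ne_of_gt hznorm), mul_one]
      linarith
    rw [hC] at hmem
    have := hmem z hz
    rw [inner_sub_left, real_inner_smul_left, real_inner_self_eq_norm_sq] at this
    have hpos : 0 < ε / (2 * ‖z‖) * (‖z‖ * ‖z‖) := by positivity
    nlinarith [this]
  -- continuity of the quotient maps on Z
  have hcont : ∀ y : EuclideanSpace ℝ (Fin m),
      ContinuousOn (fun z => ⟪y, z⟫ / ⟪e, z⟫) Z := by
    intro y
    apply ContinuousOn.div
    · exact (continuous_const.inner continuous_id).continuousOn
    · exact (continuous_const.inner continuous_id).continuousOn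
    · exact fun z hz => ne_of_gt (he z hz)
  -- f (F p) is attained at some z₀
  obtain ⟨z₀, hz₀Z, hz₀max⟩ := hZcomp.exists_isMaxOn hZne (hcont (F p))
  have hfp : f (F p) = ⟪F p, z₀⟫ / ⟪e, z₀⟫ := by
    rw [hf]
    refine IsGreatest.csSup_eq ⟨⟨z₀, hz₀Z, rfl⟩, ?_⟩
    rintro _ ⟨z, hz, rfl⟩
    exact hz₀max hz
  -- f (F pstar) ≥ value at z₀
  have hbdd : BddAbove ((fun z => ⟪F pstar, z⟫ / ⟪e, z⟫) '' Z) :=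
    (hZcomp.image_of_continuousOn (hcont (F pstar))).bddAbove
  have hge : ⟪F pstar, z₀⟫ / ⟪e, z₀⟫ ≤ f (F pstar) := by
    rw [hf]
    exact le_csSup hbdd ⟨z₀, hz₀Z, rfl⟩
  have hsplit : ⟪F pstar, z₀⟫ = ⟪F p, z₀⟫ + ⟪d, z₀⟫ := by
    rw [hd, inner_sub_left]; ring
  have hlt : f (F p) < f (F pstar) := by
    have h1 : ⟪F p, z₀⟫ / ⟪e, z₀⟫ < ⟪F pstar, z₀⟫ / ⟪e, z₀⟫ := by
      apply (div_lt_div_iff_of_pos_right (he z₀ hz₀Z)).mpr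
      have := hdpos z₀ hz₀Z
      linarith [hsplit]
    rw [hfp]
    exact lt_of_lt_of_le h1 hge
  exact absurd (hmin p hpS) (not_le.mpr hlt)
end

section
/- For every y ∈ ℝ^m, the infimum inf{t ∈ ℝ : t·e − y ∈ C} is finite, attained, and equals sup_{z ∈ Z} ⟨y,z⟩/⟨e,z⟩. In other words, the nonlinear scalarization f(y) := inf{t ∈ ℝ : t·e ∈ y + C} coincides with the maximum formula f(y) = max_{z ∈ Z} ⟨y,z⟩/⟨e,z⟩. -/
open RealInnerProductSpace

/-- The infimum `inf {t : t • e - y ∈ C}` is finite and attained, and equals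
`sup_{z ∈ Z} ⟪y,z⟫ / ⟪e,z⟫`; i.e. the nonlinear scalarization
`f y = inf {t : t • e ∈ y + C}` coincides with the maximum formula. -/
theorem scalarization_inf_eq_sup {m : ℕ} (hm : 1 ≤ m)
    (Z : Set (EuclideanSpace ℝ (Fin m))) (hZne : Z.Nonempty) (hZcomp : IsCompact Z)
    (hZ0 : (0 : EuclideanSpace ℝ (Fin m)) ∉ Z)
    (C : Set (EuclideanSpace ℝ (Fin m)))
    (hC : C = {y : EuclideanSpace ℝ (Fin m) | ∀ z ∈ Z, 0 ≤ ⟪y, z⟫})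
    (e : EuclideanSpace ℝ (Fin m)) (he : ∀ z ∈ Z, 0 < ⟪e, z⟫)
    (y : EuclideanSpace ℝ (Fin m)) :
    IsLeast {t : ℝ | t • e - y ∈ C} (sSup ((fun z => ⟪y, z⟫ / ⟪e, z⟫) '' Z)) := by
  have hcont : ContinuousOn (fun z : EuclideanSpace ℝ (Fin m) => ⟪y, z⟫ / ⟪e, z⟫) Z := by
    apply ContinuousOn.div
    · exact (Continuous.inner continuous_const continuous_id).continuousOn
    · exact (Continuous.inner continuous_const continuous_id).continuousOn
    · intro z hz; exact (he z hz).ne'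
  have hbdd : BddAbove ((fun z => ⟪y, z⟫ / ⟪e, z⟫) '' Z) :=
    (hZcomp.image_of_continuousOn hcont).bddAbove
  have hne : ((fun z => ⟪y, z⟫ / ⟪e, z⟫) '' Z).Nonempty := hZne.image _
  constructor
  · rw [Set.mem_setOf_eq, hC]
    intro z hz
    have h1 : ⟪y, z⟫ / ⟪e, z⟫ ≤ sSup ((fun z => ⟪y, z⟫ / ⟪e, z⟫) '' Z) :=
      le_csSup hbdd ⟨z, hz, rfl⟩
    rw [div_le_iff₀ (he z hz)] at h1
    rw [inner_sub_left, real_inner_smul_left]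
    linarith
  · intro t ht
    apply csSup_le hne
    rintro x ⟨z, hz, rfl⟩
    rw [Set.mem_setOf_eq, hC] at ht
    have := ht z hz
    rw [inner_sub_left, real_inner_smul_left] at this
    rw [div_le_iff₀ (he z hz)]
    linarith
end

section
/- Let n ≥ 1, let F : ℝ^n → ℝ^m be continuous and C-convex (t·F(x) + (1−t)·F(y) − F(t·x + (1−t)·y) ∈ C for all x, y ∈ ℝ^n, t ∈ [0,1]), let Ω ⊆ ℝ^n be nonempty, closed and convex, let λ > 0 and q ∈ ℝ^n. Then the strongly convex function φ(p) := f(F(p)) + (λ/2)‖p − q‖² attains its minimum over Ω at exactly one point; i.e. there exists a unique p⁺ ∈ Ω with φ(p⁺) ≤ φ(p) for all p ∈ Ω. -/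
/-!
The scalarization `f` is a supremum of linear functionals, hence convex, and it is monotone for the
order of `C`, the dual cone of `Z`; so `f ∘ F` is convex, and therefore continuous because the
space is finite-dimensional. A convex function decreases at most linearly away from a point, so
adding `λ/2 ‖p - q‖²` gives a strictly convex, coercive, continuous function. It attains its
minimum on the closed set `Ω`, and strict convexity makes the minimizer unique.
-/

open Set Filter Metric RealInnerProductSpace

def ConeConvex {E F : Type*} [AddCommGroup E] [Module ℝ E] [AddCommGroup F] [Module ℝ F]
    (C : Set F) (G : E → F) : Prop :=
  ∀ x y : E, ∀ t ∈ Icc (0 : ℝ) 1, t • G x + (1 - t) • G y - G (t • x + (1 - t) • y) ∈ C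

lemma ConvexOn.comp_coneConvex {E F : Type*} [AddCommGroup E] [Module ℝ E] [AddCommGroup F]
    [Module ℝ F] {C : Set F} {f : F → ℝ} {G : E → F} (hf : ConvexOn ℝ univ f)
    (hmono : ∀ y y', y' - y ∈ C → f y ≤ f y') (hG : ConeConvex C G) :
    ConvexOn ℝ univ (f ∘ G) := by
  refine ⟨convex_univ, fun x _ y _ a b ha hb hab => ?_⟩
  obtain rfl : b = 1 - a := by linarith
  calc f (G (a • x + (1 - a) • y)) ≤ f (a • G x + (1 - a) • G y) :=
        hmono _ _ (hG x y a ⟨ha, by linarith⟩)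
    _ ≤ a • f (G x) + (1 - a) • f (G y) := hf.2 trivial trivial ha hb hab

lemma convexOn_csSup_image {ι E : Type*} [AddCommGroup E] [Module ℝ E] {s : Set E} {Z : Set ι}
    (hZ : Z.Nonempty) {g : ι → E → ℝ} (hg : ∀ i ∈ Z, ConvexOn ℝ s (g i))
    (hbdd : ∀ x ∈ s, BddAbove ((g · x) '' Z)) :
    ConvexOn ℝ s fun x => sSup ((g · x) '' Z) := by
  refine ⟨(hg _ hZ.some_mem).1, fun x hx y hy a b ha hb hab => ?_⟩
  refine csSup_le (hZ.image _) (forall_mem_image.2 fun i hi => ?_)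
  calc g i (a • x + b • y) ≤ a • g i x + b • g i y := (hg i hi).2 hx hy ha hb hab
    _ ≤ a • sSup ((g · x) '' Z) + b • sSup ((g · y) '' Z) := by
      gcongr
      exacts [le_csSup (hbdd x hx) (mem_image_of_mem _ hi),
        le_csSup (hbdd y hy) (mem_image_of_mem _ hi)]

lemma StrictConvexOn.existsUnique_isMinOn {E : Type*} [TopologicalSpace E] [AddCommGroup E]
    [Module ℝ E] {φ : E → ℝ} {s : Set E} (hφ : StrictConvexOn ℝ s φ) (hφc : ContinuousOn φ s)
    (hφ_coercive : Tendsto φ (cocompact E) atTop) (hs : IsClosed s) (hne : s.Nonempty) :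
    ∃! x, x ∈ s ∧ IsMinOn φ s x := by
  obtain ⟨x₀, hx₀⟩ := hne
  obtain ⟨x, hx, hmin⟩ := hφc.exists_isMinOn' hs hx₀
    ((hφ_coercive.eventually_ge_atTop (φ x₀)).filter_mono inf_le_left)
  exact ⟨x, ⟨hx, hmin⟩, fun y ⟨hy, hymin⟩ => hφ.eq_of_isMinOn hymin hmin hy hx⟩

section Convexity

variable {E : Type*} [NormedAddCommGroup E]

lemma strictConvexOn_mul_norm_sub_sq [InnerProductSpace ℝ E] {c : ℝ} (hc : 0 < c) (q : E) :
    StrictConvexOn ℝ univ fun x : E => c * ‖x - q‖ ^ 2 := by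
  have hstrong : StrongConvexOn univ (2 * c) fun x : E => c * ‖x‖ ^ 2 := by
    have hzero : (fun x : E => c * ‖x‖ ^ 2 - 2 * c / 2 * ‖x‖ ^ 2) = fun _ => 0 := by
      funext x
      ring
    rw [strongConvexOn_iff_convex, hzero]
    exact convexOn_const 0 convex_univ
  simpa [Function.comp_def, sub_eq_add_neg] using
    (hstrong.strictConvexOn (by positivity)).translate_left (-q)

variable [NormedSpace ℝ E]

lemma ConvexOn.add_mul_norm_sub_le_of_le_on_closedBall {g : E → ℝ} (hg : ConvexOn ℝ univ g)
    {q p : E} {B : ℝ} (hB : ∀ x ∈ closedBall q 1, B ≤ g x) (hp : 1 ≤ ‖p - q‖) :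
    g q + (B - g q) * ‖p - q‖ ≤ g p := by
  set d := ‖p - q‖
  have hd : 0 < d := one_pos.trans_le hp
  -- the point at distance `1` from `q` on the segment towards `p`
  set w := d⁻¹ • p + (1 - d⁻¹) • q
  have hw : w ∈ closedBall q 1 := by
    have : w - q = d⁻¹ • (p - q) := by module
    rw [mem_closedBall, dist_eq_norm, this, norm_smul, Real.norm_of_nonneg (by positivity),
      inv_mul_cancel₀ hd.ne']
  have hconv : g w ≤ d⁻¹ * g p + (1 - d⁻¹) * g q :=
    hg.2 trivial trivial (by positivity) (sub_nonneg.2 (inv_le_one_of_one_le₀ hp)) (by ring)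
  have key : d * (d⁻¹ * g p + (1 - d⁻¹) * g q) = g p + (d - 1) * g q := by
    field_simp
  have := mul_le_mul_of_nonneg_left ((hB w hw).trans hconv) hd.le
  rw [key] at this
  linarith

lemma ConvexOn.tendsto_add_mul_norm_sub_sq_cocompact [ProperSpace E] {g : E → ℝ}
    (hg : ConvexOn ℝ univ g) (hgc : Continuous g) {c : ℝ} (hc : 0 < c) (q : E) :
    Tendsto (fun p => g p + c * ‖p - q‖ ^ 2) (cocompact E) atTop := by
  obtain ⟨x₀, -, hx₀⟩ := (isCompact_closedBall q 1).exists_isMinOn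
    (nonempty_closedBall.2 zero_le_one) hgc.continuousOn
  have hdist : Tendsto (fun p => ‖p - q‖) (cocompact E) atTop := by
    simpa [dist_eq_norm] using tendsto_dist_right_cocompact_atTop q
  have hquad : Tendsto (fun d : ℝ => g q + d * (c * d + (g x₀ - g q))) atTop atTop :=
    tendsto_atTop_add_const_left _ _ <| tendsto_id.atTop_mul_atTop₀ <|
      tendsto_atTop_add_const_right _ _ (tendsto_id.const_mul_atTop hc)
  refine tendsto_atTop_mono' _ ?_ (hquad.comp hdist)
  filter_upwards [hdist.eventually_ge_atTop 1] with p hp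
  have := hg.add_mul_norm_sub_le_of_le_on_closedBall (fun x hx => hx₀ hx) hp
  simp only [Function.comp_apply]
  linear_combination this

end Convexity

section Scalarization

variable {E : Type*} [NormedAddCommGroup E] [InnerProductSpace ℝ E] {Z : Set E} {e : E}

lemma convexOn_inner_div_inner (e z : E) : ConvexOn ℝ univ fun y : E => ⟪y, z⟫ / ⟪e, z⟫ :=
  ⟨convex_univ, fun x _ y _ a b _ _ _ => le_of_eq <| by
    simp only [smul_eq_mul, inner_add_left, real_inner_smul_left]
    ring⟩

lemma bddAbove_inner_div_inner_image (hZ : IsCompact Z) (he : ∀ z ∈ Z, 0 < ⟪e, z⟫) (y : E) :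
    BddAbove ((fun z => ⟪y, z⟫ / ⟪e, z⟫) '' Z) :=
  (hZ.image_of_continuousOn <| ContinuousOn.div (by fun_prop) (by fun_prop)
    fun z hz => (he z hz).ne').bddAbove

lemma convexOn_sSup_inner_div_inner_image (hZne : Z.Nonempty) (hZ : IsCompact Z)
    (he : ∀ z ∈ Z, 0 < ⟪e, z⟫) :
    ConvexOn ℝ univ fun y : E => sSup ((fun z => ⟪y, z⟫ / ⟪e, z⟫) '' Z) :=
  convexOn_csSup_image hZne (fun z _ => convexOn_inner_div_inner e z)
    fun y _ => bddAbove_inner_div_inner_image hZ he y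

lemma sSup_inner_div_inner_image_mono (hZne : Z.Nonempty) (hZ : IsCompact Z)
    (he : ∀ z ∈ Z, 0 < ⟪e, z⟫) {y y' : E} (hyy' : ∀ z ∈ Z, 0 ≤ ⟪y' - y, z⟫) :
    sSup ((fun z => ⟪y, z⟫ / ⟪e, z⟫) '' Z) ≤ sSup ((fun z => ⟪y', z⟫ / ⟪e, z⟫) '' Z) := by
  refine csSup_le (hZne.image _) (forall_mem_image.2 fun z hz => ?_)
  refine le_csSup_of_le (bddAbove_inner_div_inner_image hZ he y') (mem_image_of_mem _ hz) ?_
  have := hyy' z hz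
  rw [inner_sub_left, sub_nonneg] at this
  exact div_le_div_of_nonneg_right this (he z hz).le

end Scalarization

theorem proximal_subproblem_unique_minimizer_general {m : ℕ}
    (Z : Set (EuclideanSpace ℝ (Fin m))) (hZne : Z.Nonempty) (hZcomp : IsCompact Z)
    (C : Set (EuclideanSpace ℝ (Fin m)))
    (hC : C = {y : EuclideanSpace ℝ (Fin m) | ∀ z ∈ Z, 0 ≤ ⟪y, z⟫})
    (e : EuclideanSpace ℝ (Fin m)) (he : ∀ z ∈ Z, 0 < ⟪e, z⟫)
    (f : EuclideanSpace ℝ (Fin m) → ℝ)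
    (hf : ∀ y, f y = sSup ((fun z => ⟪y, z⟫ / ⟪e, z⟫) '' Z))
    {n : ℕ} (F : EuclideanSpace ℝ (Fin n) → EuclideanSpace ℝ (Fin m))
    (hFconv : ∀ x y : EuclideanSpace ℝ (Fin n), ∀ t ∈ Set.Icc (0 : ℝ) 1,
      t • F x + (1 - t) • F y - F (t • x + (1 - t) • y) ∈ C)
    (Ω : Set (EuclideanSpace ℝ (Fin n))) (hΩne : Ω.Nonempty)
    (hΩclosed : IsClosed Ω) (hΩconv : Convex ℝ Ω)
    (lam : ℝ) (hlam : 0 < lam) (q : EuclideanSpace ℝ (Fin n)) :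
    ∃! pplus : EuclideanSpace ℝ (Fin n), pplus ∈ Ω ∧
      ∀ p ∈ Ω, f (F pplus) + lam / 2 * ‖pplus - q‖ ^ 2
        ≤ f (F p) + lam / 2 * ‖p - q‖ ^ 2 := by
  subst hC
  have hf_convex : ConvexOn ℝ univ f := by
    simpa only [← hf] using convexOn_sSup_inner_div_inner_image hZne hZcomp he
  have hf_mono : ∀ y y', y' - y ∈ {y | ∀ z ∈ Z, 0 ≤ ⟪y, z⟫} → f y ≤ f y' := fun y y' h => by
    simpa only [hf] using sSup_inner_div_inner_image_mono hZne hZcomp he h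
  have hg : ConvexOn ℝ univ (f ∘ F) := hf_convex.comp_coneConvex hf_mono hFconv
  have hgc : Continuous (f ∘ F) := continuousOn_univ.1 (hg.continuousOn isOpen_univ)
  have hφ : StrictConvexOn ℝ Ω fun p => f (F p) + lam / 2 * ‖p - q‖ ^ 2 :=
    (hg.add_strictConvexOn (strictConvexOn_mul_norm_sub_sq (half_pos hlam) q)).subset
      (subset_univ _) hΩconv
  simpa only [isMinOn_iff] using hφ.existsUnique_isMinOn
    (hgc.add (by fun_prop : Continuous fun p => lam / 2 * ‖p - q‖ ^ 2)).continuousOn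
    (hg.tendsto_add_mul_norm_sub_sq_cocompact hgc (half_pos hlam) q) hΩclosed hΩne

/-- If `F : ℝ^n → ℝ^m` is continuous and `C`-convex, `Ω` is nonempty closed convex,
`λ > 0` and `q ∈ ℝ^n`, then the strongly convex function
`φ p = f (F p) + (λ/2) * ‖p - q‖²` has exactly one minimizer over `Ω`. -/
theorem proximal_subproblem_unique_minimizer {m : ℕ} (hm : 1 ≤ m)
    (Z : Set (EuclideanSpace ℝ (Fin m))) (hZne : Z.Nonempty) (hZcomp : IsCompact Z)
    (hZ0 : (0 : EuclideanSpace ℝ (Fin m)) ∉ Z)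
    (C : Set (EuclideanSpace ℝ (Fin m)))
    (hC : C = {y : EuclideanSpace ℝ (Fin m) | ∀ z ∈ Z, 0 ≤ ⟪y, z⟫})
    (e : EuclideanSpace ℝ (Fin m)) (he : ∀ z ∈ Z, 0 < ⟪e, z⟫)
    (f : EuclideanSpace ℝ (Fin m) → ℝ)
    (hf : ∀ y, f y = sSup ((fun z => ⟪y, z⟫ / ⟪e, z⟫) '' Z))
    {n : ℕ} (hn : 1 ≤ n) (F : EuclideanSpace ℝ (Fin n) → EuclideanSpace ℝ (Fin m))
    (hFcont : Continuous F)
    (hFconv : ∀ x y : EuclideanSpace ℝ (Fin n), ∀ t ∈ Set.Icc (0 : ℝ) 1,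
      t • F x + (1 - t) • F y - F (t • x + (1 - t) • y) ∈ C)
    (Ω : Set (EuclideanSpace ℝ (Fin n))) (hΩne : Ω.Nonempty)
    (hΩclosed : IsClosed Ω) (hΩconv : Convex ℝ Ω)
    (lam : ℝ) (hlam : 0 < lam) (q : EuclideanSpace ℝ (Fin n)) :
    ∃! pplus : EuclideanSpace ℝ (Fin n), pplus ∈ Ω ∧
      ∀ p ∈ Ω, f (F pplus) + lam / 2 * ‖pplus - q‖ ^ 2
        ≤ f (F p) + lam / 2 * ‖p - q‖ ^ 2 :=
  proximal_subproblem_unique_minimizer_general Z hZne hZcomp C hC e he f hf F hFconv Ω hΩne hΩclosed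
    hΩconv lam hlam q
end

section
/- Under the stated assumptions on the proximal point iteration, the sequence {p^k} converges to a point p̄ ∈ ℝ^n that is a weakly efficient point of F, i.e. there is no p ∈ ℝ^n with F(p̄) − F(p) ∈ interior C. -/
open RealInnerProductSpace

lemma aux_strong {E : Type*} [NormedAddCommGroup E] [InnerProductSpace ℝ E]
    (g : E → ℝ) (S : Set E) (lam : ℝ) (hlam : 0 < lam) (pk x : E)
    (hconv : ∀ q ∈ S, ∀ t ∈ Set.Ioc (0:ℝ) 1, ((1-t)•x + t•q ∈ S ∧
      g ((1-t)•x + t•q) ≤ (1-t)*g x + t*g q))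
    (hmin : ∀ q ∈ S, g x + lam/2*‖x-pk‖^2 ≤ g q + lam/2*‖q-pk‖^2) :
    ∀ q ∈ S, g x + lam/2*‖x-pk‖^2 + lam/2*‖q-x‖^2 ≤ g q + lam/2*‖q-pk‖^2 := by
  intro q hq
  have key : g x ≤ g q + lam * ⟪x - pk, q - x⟫ := by
    apply le_of_forall_pos_le_add
    intro ε hε
    set c : ℝ := lam/2*‖q-x‖^2 with hc
    have hc0 : 0 ≤ c := by positivity
    set t : ℝ := min 1 (ε/(c+ε)) with ht
    have htpos : 0 < t := lt_min one_pos (by positivity)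
    have ht1 : t ≤ 1 := min_le_left _ _
    have htc : t * c ≤ ε := by
      calc t * c ≤ (ε/(c+ε)) * c := by
            apply mul_le_mul_of_nonneg_right (min_le_right _ _) hc0
        _ ≤ ε := by
            rw [div_mul_eq_mul_div, div_le_iff₀ (by positivity)]
            nlinarith
    obtain ⟨hmem, hgc⟩ := hconv q hq t ⟨htpos, ht1⟩
    have hm := hmin _ hmem
    have hexp : ‖((1-t)•x + t•q) - pk‖^2
        = ‖x - pk‖^2 + 2*(t*⟪x-pk, q-x⟫) + t^2*‖q-x‖^2 := by
      have h1 : ((1-t)•x + t•q) - pk = (x - pk) + t•(q-x) := by module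
      rw [h1, norm_add_sq_real, real_inner_smul_right, norm_smul]
      simp [mul_pow, abs_of_pos htpos]
    rw [hexp] at hm
    have hstep : t * (g x - g q) ≤ lam * (t*⟪x-pk,q-x⟫) + lam/2 * (t^2*‖q-x‖^2) := by
      nlinarith [hgc, hm]
    have hdiv : g x - g q ≤ lam * ⟪x-pk,q-x⟫ + t * c := by
      have h2 : t * (g x - g q) ≤ t * (lam * ⟪x-pk,q-x⟫ + t * c) := by
        calc t * (g x - g q) ≤ lam * (t*⟪x-pk,q-x⟫) + lam/2 * (t^2*‖q-x‖^2) := hstep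
          _ = t * (lam * ⟪x-pk,q-x⟫ + t * c) := by rw [hc]; ring
      exact le_of_mul_le_mul_left h2 htpos
    linarith [htc, hdiv]
  have hexp2 : ‖q - pk‖^2 = ‖q-x‖^2 + 2*⟪q-x, x-pk⟫ + ‖x-pk‖^2 := by
    have h1 : q - pk = (q-x) + (x-pk) := by abel
    rw [h1, norm_add_sq_real]
  have hcomm : ⟪x-pk, q-x⟫ = ⟪q-x, x-pk⟫ := real_inner_comm _ _
  rw [hexp2]; rw [hcomm] at key; nlinarith [key]

set_option maxHeartbeats 1000000 in
/-- For the proximal point iteration for vector optimization (Euclidean instance):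
`F` continuous and `C`-convex, `{λ_k}` bounded positive, `e^k ∈ interior C` with
`‖e^k‖ = 1`, `f_k y = sup_{z ∈ Z} ⟪y,z⟫ / ⟪e^k,z⟫`, `Ω_k = {p : F p ⪯_C F (p^k)}`,
`p^{k+1} ∈ Ω_k` minimizing `p ↦ f_k (F p + (λ_k/2) ‖p - p^k‖² • e^k)` over `Ω_k`, and
`Ω̄ = ⋂_k Ω_k ≠ ∅`, the sequence `{p^k}` converges to a weakly efficient point of `F`. -/
theorem proximal_sequence_converges_weakly_efficient {m : ℕ} (hm : 1 ≤ m)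
    (Z : Set (EuclideanSpace ℝ (Fin m))) (hZne : Z.Nonempty) (hZcomp : IsCompact Z)
    (hZ0 : (0 : EuclideanSpace ℝ (Fin m)) ∉ Z)
    (C : Set (EuclideanSpace ℝ (Fin m)))
    (hC : C = {y : EuclideanSpace ℝ (Fin m) | ∀ z ∈ Z, 0 ≤ ⟪y, z⟫})
    {n : ℕ} (hn : 1 ≤ n) (F : EuclideanSpace ℝ (Fin n) → EuclideanSpace ℝ (Fin m))
    (hFcont : Continuous F)
    (hFconv : ∀ x y : EuclideanSpace ℝ (Fin n), ∀ t ∈ Set.Icc (0 : ℝ) 1,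
      t • F x + (1 - t) • F y - F (t • x + (1 - t) • y) ∈ C)
    (lam : ℕ → ℝ) (hlampos : ∀ k, 0 < lam k) (hlambdd : ∃ B : ℝ, ∀ k, lam k ≤ B)
    (ek : ℕ → EuclideanSpace ℝ (Fin m))
    (hek : ∀ k, ek k ∈ interior C ∧ ‖ek k‖ = 1)
    (fk : ℕ → EuclideanSpace ℝ (Fin m) → ℝ)
    (hfk : ∀ k y, fk k y = sSup ((fun z => ⟪y, z⟫ / ⟪ek k, z⟫) '' Z))
    (p : ℕ → EuclideanSpace ℝ (Fin n))
    (hiter : ∀ k : ℕ, F (p k) - F (p (k + 1)) ∈ C ∧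
      ∀ q : EuclideanSpace ℝ (Fin n), F (p k) - F q ∈ C →
        fk k (F (p (k + 1)) + (lam k / 2 * ‖p (k + 1) - p k‖ ^ 2) • ek k)
          ≤ fk k (F q + (lam k / 2 * ‖q - p k‖ ^ 2) • ek k))
    (hΩbar : (⋂ k : ℕ, {q : EuclideanSpace ℝ (Fin n) | F (p k) - F q ∈ C}).Nonempty) :
    ∃ pbar : EuclideanSpace ℝ (Fin n),
      Filter.Tendsto p Filter.atTop (nhds pbar) ∧
      ¬ ∃ q : EuclideanSpace ℝ (Fin n), F pbar - F q ∈ interior C := by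
  -- basic cone properties
  have hC0 : (0 : EuclideanSpace ℝ (Fin m)) ∈ C := by
    rw [hC]; intro z hz; simp
  have hCadd : ∀ a ∈ C, ∀ b ∈ C, a + b ∈ C := by
    intro a ha b hb; rw [hC] at *
    intro z hz; rw [inner_add_left]
    exact add_nonneg (ha z hz) (hb z hz)
  have hCsmul : ∀ (t : ℝ), 0 ≤ t → ∀ a ∈ C, t • a ∈ C := by
    intro t ht a ha; rw [hC] at *
    intro z hz; rw [real_inner_smul_left]
    exact mul_nonneg ht (ha z hz)
  have hCclosed : IsClosed C := by
    have h : C = ⋂ z ∈ Z, {y : EuclideanSpace ℝ (Fin m) | 0 ≤ ⟪y, z⟫} := by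
      rw [hC]; ext y; simp
    rw [h]
    exact isClosed_biInter fun z _ =>
      isClosed_le continuous_const (continuous_id.inner continuous_const)
  -- interior lower bound
  have hintlow : ∀ v ∈ interior C, ∃ ε > (0:ℝ), ∀ z ∈ Z, ε * ‖z‖ ≤ ⟪v, z⟫ := by
    intro v hv
    obtain ⟨ε, hε, hball⟩ := Metric.mem_nhds_iff.mp (mem_interior_iff_mem_nhds.mp hv)
    refine ⟨ε/2, by positivity, ?_⟩
    intro z hz
    have hzne : z ≠ 0 := fun h => hZ0 (h ▸ hz)
    have hznorm : (0:ℝ) < ‖z‖ := norm_pos_iff.mpr hzne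
    have hw : v - ((ε/2)/‖z‖) • z ∈ Metric.ball v ε := by
      rw [Metric.mem_ball, dist_eq_norm]
      have h1 : v - ((ε/2)/‖z‖) • z - v = -(((ε/2)/‖z‖) • z) := by abel
      rw [h1, norm_neg, norm_smul, Real.norm_eq_abs, abs_of_nonneg (by positivity),
        div_mul_cancel₀ _ (ne_of_gt hznorm)]
      linarith
    have hwC := hball hw
    rw [hC] at hwC
    have h0 := hwC z hz
    rw [inner_sub_left, real_inner_smul_left, real_inner_self_eq_norm_sq] at h0
    have hx : (ε/2)/‖z‖ * ‖z‖^2 = ε/2 * ‖z‖ := by field_simp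
    nlinarith [h0]
  have hez : ∀ k, ∀ z ∈ Z, 0 < ⟪ek k, z⟫ := by
    intro k z hz
    obtain ⟨ε, hε, hb⟩ := hintlow (ek k) (hek k).1
    have h1 := hb z hz
    have hzne : z ≠ 0 := fun h => hZ0 (h ▸ hz)
    have hznorm : (0:ℝ) < ‖z‖ := norm_pos_iff.mpr hzne
    nlinarith
  -- fk properties
  have hbdd : ∀ k y, BddAbove ((fun z => ⟪y, z⟫ / ⟪ek k, z⟫) '' Z) := by
    intro k y
    apply IsCompact.bddAbove
    apply hZcomp.image_of_continuousOn
    exact ((continuous_const.inner continuous_id).continuousOn).div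
      ((continuous_const.inner continuous_id).continuousOn)
      (fun z hz => ne_of_gt (hez k z hz))
  have hle_fk : ∀ k y, ∀ z ∈ Z, ⟪y, z⟫ / ⟪ek k, z⟫ ≤ fk k y := by
    intro k y z hz
    rw [hfk]
    exact le_csSup (hbdd k y) ⟨z, hz, rfl⟩
  have hfk_le : ∀ k y r, (∀ z ∈ Z, ⟪y, z⟫ / ⟪ek k, z⟫ ≤ r) → fk k y ≤ r := by
    intro k y r h
    rw [hfk]
    apply csSup_le (hZne.image _)
    rintro _ ⟨z, hz, rfl⟩
    exact h z hz
  have htrans : ∀ k y (t : ℝ), fk k (y + t • ek k) = fk k y + t := by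
    intro k y t
    have hcalc : ∀ z ∈ Z, ⟪y + t • ek k, z⟫ / ⟪ek k, z⟫ = ⟪y, z⟫ / ⟪ek k, z⟫ + t := by
      intro z hz
      rw [inner_add_left, real_inner_smul_left, add_div, mul_div_assoc,
        div_self (ne_of_gt (hez k z hz)), mul_one]
    apply le_antisymm
    · apply hfk_le; intro z hz; rw [hcalc z hz]
      linarith [hle_fk k y z hz]
    · have h : fk k y ≤ fk k (y + t • ek k) - t := by
        apply hfk_le; intro z hz
        have h2 := hle_fk k (y + t • ek k) z hz
        rw [hcalc z hz] at h2; linarith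
      linarith
  have hmono : ∀ k y y', y - y' ∈ C → fk k y' ≤ fk k y := by
    intro k y y' hyy
    apply hfk_le; intro z hz
    have h1 : 0 ≤ ⟪y - y', z⟫ := by rw [hC] at hyy; exact hyy z hz
    rw [inner_sub_left] at h1
    have h2 := hle_fk k y z hz
    have hezz := hez k z hz
    have h3 : ⟪y', z⟫ / ⟪ek k, z⟫ ≤ ⟪y, z⟫ / ⟪ek k, z⟫ := by
      gcongr
      linarith
    linarith
  have hconvf : ∀ k y1 y2, ∀ t ∈ Set.Icc (0:ℝ) 1,
      fk k ((1-t)•y1 + t•y2) ≤ (1-t)*fk k y1 + t*fk k y2 := by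
    intro k y1 y2 t ht
    apply hfk_le; intro z hz
    have h1 := hle_fk k y1 z hz
    have h2 := hle_fk k y2 z hz
    have hezz := hez k z hz
    have hcalc : ⟪(1-t)•y1 + t•y2, z⟫ / ⟪ek k, z⟫
        = (1-t)*(⟪y1, z⟫/⟪ek k, z⟫) + t*(⟪y2, z⟫/⟪ek k, z⟫) := by
      rw [inner_add_left, real_inner_smul_left, real_inner_smul_left, add_div,
        mul_div_assoc, mul_div_assoc]
    rw [hcalc]
    have ht0 : (0:ℝ) ≤ t := ht.1
    have ht1 : t ≤ 1 := ht.2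
    nlinarith [h1, h2]
  -- convexity of the sublevel sets
  have hconvseg : ∀ k, ∀ x, F (p k) - F x ∈ C → ∀ q, F (p k) - F q ∈ C →
      ∀ t ∈ Set.Icc (0:ℝ) 1, F (p k) - F ((1-t)•x + t•q) ∈ C := by
    intro k x hx q hq t ht
    have h1 : (1-t) • (F (p k) - F x) ∈ C := hCsmul _ (by linarith [ht.2]) _ hx
    have h2 : t • (F (p k) - F q) ∈ C := hCsmul _ ht.1 _ hq
    have h3 := hFconv q x t ht
    have h4 := hCadd _ (hCadd _ h1 _ h2) _ h3
    have harg : (1-t)•x + t•q = t•q + (1-t)•x := by module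
    rw [harg]
    have he : F (p k) - F (t•q + (1-t)•x)
        = (1-t)•(F (p k) - F x) + t•(F (p k) - F q)
          + (t•F q + (1-t)•F x - F (t•q + (1-t)•x)) := by module
    rw [he]
    exact h4
  -- convexity of scalarized objective
  have hgconv : ∀ k a b, ∀ t ∈ Set.Icc (0:ℝ) 1,
      fk k (F ((1-t)•a + t•b)) ≤ (1-t)*fk k (F a) + t*fk k (F b) := by
    intro k a b t ht
    have h1 : fk k (F ((1-t)•a + t•b)) ≤ fk k ((1-t)•F a + t•F b) := by
      apply hmono
      have h2 := hFconv b a t ht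
      have harg : (1-t)•a + t•b = t•b + (1-t)•a := by module
      have he : (1-t)•F a + t•F b - F (t•b + (1-t)•a)
          = t•F b + (1-t)•F a - F (t•b + (1-t)•a) := by module
      rw [harg, he]
      exact h2
    exact le_trans h1 (hconvf k (F a) (F b) t ht)
  -- rewritten minimality
  have hmin' : ∀ k, ∀ q, F (p k) - F q ∈ C →
      fk k (F (p (k+1))) + lam k/2*‖p (k+1) - p k‖^2
        ≤ fk k (F q) + lam k/2*‖q - p k‖^2 := by
    intro k q hq
    have h := (hiter k).2 q hq
    rw [htrans, htrans] at h
    exact h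
  -- strong-convexity refined inequality
  have hstar : ∀ k, ∀ q, F (p k) - F q ∈ C →
      fk k (F (p (k+1))) + lam k/2*‖p (k+1) - p k‖^2 + lam k/2*‖q - p (k+1)‖^2
        ≤ fk k (F q) + lam k/2*‖q - p k‖^2 := by
    intro k q hq
    have hx : F (p k) - F (p (k+1)) ∈ C := (hiter k).1
    exact aux_strong (fun x => fk k (F x)) {q | F (p k) - F q ∈ C} (lam k)
      (hlampos k) (p k) (p (k+1))
      (by
        intro q' hq' t ht
        have ht' : t ∈ Set.Icc (0:ℝ) 1 := ⟨le_of_lt ht.1, ht.2⟩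
        exact ⟨hconvseg k _ hx _ hq' t ht', hgconv k _ _ t ht'⟩)
      (fun q' hq' => hmin' k q' hq') q hq
  -- Fejér inequality
  have hfej : ∀ k q, F (p k) - F q ∈ C → F (p (k+1)) - F q ∈ C →
      ‖q - p (k+1)‖^2 + ‖p (k+1) - p k‖^2 ≤ ‖q - p k‖^2 := by
    intro k q h1 h2
    have hs := hstar k q h1
    have hmn := hmono k _ _ h2
    have h3 : lam k/2*(‖q - p (k+1)‖^2 + ‖p (k+1) - p k‖^2) ≤ lam k/2*‖q - p k‖^2 := by
      have e : lam k/2*(‖q - p (k+1)‖^2 + ‖p (k+1) - p k‖^2)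
          = lam k/2*‖q - p (k+1)‖^2 + lam k/2*‖p (k+1) - p k‖^2 := by ring
      rw [e]; linarith
    exact le_of_mul_le_mul_left h3 (by linarith [hlampos k])
  -- telescoping cone membership
  have hker : ∀ k j, k ≤ j → F (p k) - F (p j) ∈ C := by
    intro k
    refine Nat.le_induction ?_ ?_
    · simpa using hC0
    · intro j _ ih
      have h2 := (hiter j).1
      have e : F (p k) - F (p (j+1)) = (F (p k) - F (p j)) + (F (p j) - F (p (j+1))) := by
        abel
      rw [e]
      exact hCadd _ ih _ h2
  -- point in intersection
  obtain ⟨phat, hphatmem⟩ := hΩbar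
  have hphat : ∀ k, F (p k) - F phat ∈ C := fun k => Set.mem_iInter.mp hphatmem k
  have hfejhat : ∀ k, ‖phat - p (k+1)‖^2 + ‖p (k+1) - p k‖^2 ≤ ‖phat - p k‖^2 :=
    fun k => hfej k phat (hphat k) (hphat (k+1))
  -- boundedness
  have hbnd : ∀ k, ‖phat - p k‖ ≤ ‖phat - p 0‖ := by
    intro k
    have hanti : Antitone (fun k => ‖phat - p k‖^2) := by
      apply antitone_nat_of_succ_le
      intro j
      have := hfejhat j
      nlinarith [sq_nonneg ‖p (j+1) - p j‖]
    have h : ‖phat - p k‖^2 ≤ ‖phat - p 0‖^2 := hanti (Nat.zero_le k)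
    nlinarith [norm_nonneg (phat - p k), norm_nonneg (phat - p 0)]
  have hmemball : ∀ k, p k ∈ Metric.closedBall phat (‖phat - p 0‖) := by
    intro k
    rw [Metric.mem_closedBall, dist_comm, dist_eq_norm]
    exact hbnd k
  obtain ⟨pbar, -, φ, hφmono, hφtend⟩ :=
    tendsto_subseq_of_bounded Metric.isBounded_closedBall hmemball
  -- closedness of sublevel sets
  have hΩclosed : ∀ k, IsClosed {q : EuclideanSpace ℝ (Fin n) | F (p k) - F q ∈ C} := by
    intro k
    exact hCclosed.preimage (continuous_const.sub hFcont)
  have hpbar : ∀ k, F (p k) - F pbar ∈ C := by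
    intro k
    apply (hΩclosed k).mem_of_tendsto hφtend
    filter_upwards [Filter.eventually_ge_atTop k] with i hi
    exact hker k (φ i) (le_trans hi hφmono.le_apply)
  have hfejbar : ∀ k, ‖pbar - p (k+1)‖^2 + ‖p (k+1) - p k‖^2 ≤ ‖pbar - p k‖^2 :=
    fun k => hfej k pbar (hpbar k) (hpbar (k+1))
  have hbanti : Antitone (fun k => ‖pbar - p k‖) := by
    apply antitone_nat_of_succ_le
    intro j
    have := hfejbar j
    nlinarith [sq_nonneg ‖p (j+1) - p j‖, norm_nonneg (pbar - p (j+1)), norm_nonneg (pbar - p j)]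
  have hsubnorm : Filter.Tendsto (fun i => ‖pbar - p (φ i)‖) Filter.atTop (nhds 0) := by
    have h := tendsto_iff_dist_tendsto_zero.mp hφtend
    have e : (fun i => dist ((p ∘ φ) i) pbar) = fun i => ‖pbar - p (φ i)‖ := by
      funext i; rw [Function.comp_apply, dist_eq_norm, norm_sub_rev]
    rwa [e] at h
  have htend : Filter.Tendsto p Filter.atTop (nhds pbar) := by
    rw [Metric.tendsto_atTop]
    intro ε hε
    obtain ⟨i, hi⟩ := (hsubnorm.eventually_lt_const hε).exists
    refine ⟨φ i, fun j hj => ?_⟩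
    have h := hbanti hj
    rw [dist_eq_norm, norm_sub_rev]
    exact lt_of_le_of_lt h hi
  -- distance to pbar tends to 0 (squared)
  have hbn : Filter.Tendsto (fun k => ‖pbar - p k‖) Filter.atTop (nhds 0) := by
    have h := tendsto_iff_dist_tendsto_zero.mp htend
    have e : (fun k => dist (p k) pbar) = fun k => ‖pbar - p k‖ := by
      funext k; rw [dist_eq_norm, norm_sub_rev]
    rwa [e] at h
  have hb2 : Filter.Tendsto (fun k => ‖pbar - p k‖ * ‖pbar - p k‖) Filter.atTop (nhds 0) := by
    have h := hbn.mul hbn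
    rw [mul_zero] at h
    exact h
  have hΔ2 : Filter.Tendsto (fun k => ‖p (k+1) - p k‖^2) Filter.atTop (nhds 0) := by
    apply squeeze_zero (fun k => sq_nonneg _) (fun k => ?_) hb2
    have := hfejbar k
    nlinarith [sq_nonneg ‖pbar - p (k+1)‖]
  have hΔ : Filter.Tendsto (fun k => ‖p (k+1) - p k‖) Filter.atTop (nhds 0) := by
    have h := (Real.continuous_sqrt.tendsto 0).comp hΔ2
    rw [Real.sqrt_zero] at h
    have e : (Real.sqrt ∘ fun k => ‖p (k+1) - p k‖^2) = fun k => ‖p (k+1) - p k‖ := by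
      funext k; rw [Function.comp_apply, Real.sqrt_sq (norm_nonneg _)]
    rwa [e] at h
  -- conclusion
  refine ⟨pbar, htend, ?_⟩
  rintro ⟨q, hq⟩
  obtain ⟨ε, hε, hlow⟩ := hintlow _ hq
  have hqC : F pbar - F q ∈ C := interior_subset hq
  have hqΩ : ∀ k, F (p k) - F q ∈ C := by
    intro k
    have h := hCadd _ (hpbar k) _ hqC
    have e : (F (p k) - F pbar) + (F pbar - F q) = F (p k) - F q := by abel
    rwa [e] at h
  have hgap : ∀ k, fk k (F q) ≤ fk k (F (p (k+1))) - ε := by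
    intro k
    apply hfk_le; intro z hz
    have h1 : 0 ≤ ⟪F (p (k+1)) - F pbar, z⟫ := by
      have h := hpbar (k+1); rw [hC] at h; exact h z hz
    have h2 : ε * ‖z‖ ≤ ⟪F pbar - F q, z⟫ := hlow z hz
    have h3 : ⟪ek k, z⟫ ≤ ‖z‖ := by
      have h := real_inner_le_norm (ek k) z
      rwa [(hek k).2, one_mul] at h
    have hezz := hez k z hz
    rw [inner_sub_left] at h1 h2
    have h4 : ⟪F q, z⟫ ≤ ⟪F (p (k+1)), z⟫ - ε * ⟪ek k, z⟫ := by
      have h5 : ε * ⟪ek k, z⟫ ≤ ε * ‖z‖ := mul_le_mul_of_nonneg_left h3 (le_of_lt hε)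
      linarith
    have h5 := hle_fk k (F (p (k+1))) z hz
    have h6 : ⟪F q, z⟫ / ⟪ek k, z⟫ ≤ ⟪F (p (k+1)), z⟫ / ⟪ek k, z⟫ - ε := by
      rw [div_le_iff₀ hezz]
      rw [sub_mul, div_mul_cancel₀ _ (ne_of_gt hezz)]
      exact h4
    linarith
  obtain ⟨B, hB⟩ := hlambdd
  set M : ℝ := ‖q - pbar‖ + ‖pbar - p 0‖ with hM
  have hMb : ∀ k, ‖q - p (k+1)‖ ≤ M := by
    intro k
    have e : q - p (k+1) = (q - pbar) + (pbar - p (k+1)) := by abel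
    calc ‖q - p (k+1)‖ ≤ ‖q - pbar‖ + ‖pbar - p (k+1)‖ := by rw [e]; exact norm_add_le _ _
      _ ≤ M := by
          have h := hbanti (Nat.zero_le (k+1))
          rw [hM]; simp only at h; linarith
  set K : ℝ := max B 1 * max M 1 with hK
  have hK0 : (0:ℝ) < K := mul_pos (lt_of_lt_of_le one_pos (le_max_right _ _))
    (lt_of_lt_of_le one_pos (le_max_right _ _))
  have hbound : ∀ k, ε ≤ K * ‖p (k+1) - p k‖ := by
    intro k
    have hs := hstar k q (hqΩ k)
    have hg := hgap k
    have hexp : ‖q - p k‖^2 = ‖q - p (k+1)‖^2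
        + 2*⟪q - p (k+1), p (k+1) - p k⟫ + ‖p (k+1) - p k‖^2 := by
      have e : q - p k = (q - p (k+1)) + (p (k+1) - p k) := by abel
      rw [e, norm_add_sq_real]
    rw [hexp] at hs
    have h8 : lam k/2 * (‖q - p (k+1)‖^2 + 2*⟪q - p (k+1), p (k+1) - p k⟫
        + ‖p (k+1) - p k‖^2)
        = lam k/2*‖q - p (k+1)‖^2 + lam k * ⟪q - p (k+1), p (k+1) - p k⟫
          + lam k/2*‖p (k+1) - p k‖^2 := by ring
    rw [h8] at hs
    have h7 : ε ≤ lam k * ⟪q - p (k+1), p (k+1) - p k⟫ := by linarith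
    have hinner : ⟪q - p (k+1), p (k+1) - p k⟫ ≤ ‖q - p (k+1)‖ * ‖p (k+1) - p k‖ :=
      real_inner_le_norm _ _
    have h9 : lam k * ⟪q - p (k+1), p (k+1) - p k⟫
        ≤ lam k * (‖q - p (k+1)‖ * ‖p (k+1) - p k‖) :=
      mul_le_mul_of_nonneg_left hinner (le_of_lt (hlampos k))
    have hlamB : lam k ≤ max B 1 := le_trans (hB k) (le_max_left _ _)
    have hMM : ‖q - p (k+1)‖ ≤ max M 1 := le_trans (hMb k) (le_max_left _ _)
    have h10 : lam k * (‖q - p (k+1)‖ * ‖p (k+1) - p k‖) ≤ K * ‖p (k+1) - p k‖ := by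
      rw [hK]
      have hΔ0 : (0:ℝ) ≤ ‖p (k+1) - p k‖ := norm_nonneg _
      calc lam k * (‖q - p (k+1)‖ * ‖p (k+1) - p k‖)
          ≤ max B 1 * (‖q - p (k+1)‖ * ‖p (k+1) - p k‖) :=
            mul_le_mul_of_nonneg_right hlamB (by positivity)
        _ ≤ max B 1 * (max M 1 * ‖p (k+1) - p k‖) := by
            apply mul_le_mul_of_nonneg_left _ (le_trans zero_le_one (le_max_right B 1))
            exact mul_le_mul_of_nonneg_right hMM hΔ0
        _ = max B 1 * max M 1 * ‖p (k+1) - p k‖ := by ring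
    linarith
  have hev := hΔ.eventually_lt_const (show (0:ℝ) < ε / K from div_pos hε hK0)
  obtain ⟨k, hk⟩ := hev.exists
  have h1 := hbound k
  have h2 : K * ‖p (k+1) - p k‖ < K * (ε / K) := mul_lt_mul_of_pos_left hk hK0
  rw [mul_div_cancel₀ _ (ne_of_gt hK0)] at h2
  linarith
end

section
/- Let (M, d) be a metric space, F : M → ℝ^m, and p̂ ∈ M such that the level set W := {q ∈ M : F(q) = F(p̂)} is closed. If p̂ is a weak sharp minimum of F with respect to C, i.e. there exists τ > 0 such that F(p) − F(p̂) ∉ B(0, τ·d(p, W)) − C for every p ∈ M \ W, then p̂ is an efficient point of F: there is no p ∈ M with F(p̂) − F(p) ∈ C and F(p) ≠ F(p̂). -/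
open RealInnerProductSpace Pointwise

/-- If `p̂` is a weak sharp minimum of `F : M → ℝ^m` with respect to the cone
`C = {y : ∀ z ∈ Z, ⟪y,z⟫ ≥ 0}` — i.e. there exists `τ > 0` such that
`F p - F p̂ ∉ B(0, τ · d(p, W)) - C` for every `p ∈ M \ W`, where
`W = {q : F q = F p̂}` is closed — then `p̂` is an efficient point of `F`:
there is no `p` with `F p̂ - F p ∈ C` and `F p ≠ F p̂`. -/
theorem weak_sharp_minimum_is_efficient {m : ℕ} (hm : 1 ≤ m)
    (Z : Set (EuclideanSpace ℝ (Fin m))) (hZne : Z.Nonempty) (hZcomp : IsCompact Z)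
    (hZ0 : (0 : EuclideanSpace ℝ (Fin m)) ∉ Z)
    (C : Set (EuclideanSpace ℝ (Fin m)))
    (hC : C = {y : EuclideanSpace ℝ (Fin m) | ∀ z ∈ Z, 0 ≤ ⟪y, z⟫})
    {M : Type*} [MetricSpace M] (F : M → EuclideanSpace ℝ (Fin m)) (phat : M)
    (hWclosed : IsClosed {q : M | F q = F phat})
    (τ : ℝ) (hτ : 0 < τ)
    (hsharp : ∀ p : M, F p ≠ F phat →
      F p - F phat ∉
        Metric.ball (0 : EuclideanSpace ℝ (Fin m))
          (τ * Metric.infDist p {q : M | F q = F phat}) - C) :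
    ¬ ∃ p : M, F phat - F p ∈ C ∧ F p ≠ F phat := by
  rintro ⟨p, hpC, hpne⟩
  apply hsharp p hpne
  have hW : p ∉ {q : M | F q = F phat} := hpne
  have hpos : 0 < Metric.infDist p {q : M | F q = F phat} := by
    exact (hWclosed.notMem_iff_infDist_pos ⟨phat, rfl⟩).1 hW
  rw [Set.mem_sub]
  refine ⟨0, ?_, F phat - F p, hpC, by abel⟩
  simpa using mul_pos hτ hpos
end

section
/- Let (M, d) be a metric space, F : M → ℝ^m, and p̂ ∈ M such that the level set W := {q ∈ M : F(q) = F(p̂)} is closed, and define F̃ : M → ℝ^m by F̃(p) := F(p) − F(p̂). If p̂ is a weak sharp minimum of F with respect to C, i.e. there exists τ > 0 such that F(p) − F(p̂) ∉ B(0, τ·d(p, W)) − C for every p ∈ M \ W, then p̂ is a weak sharp minimum of the scalarized function f ∘ F̃: there exists τ' > 0 such that f(F̃(p)) − f(F̃(p̂)) ≥ τ'·d(p, W') for all p ∈ M, where W' := {q ∈ M : f(F̃(q)) = f(F̃(p̂))} (note f(F̃(p̂)) = f(0) = 0). -/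
/-!
Write `s(y) = sup_{z ∈ Z} ⟪y, z⟫ / ⟪e, z⟫`. For every `t ≥ s(y)` the vector `t • e - y` lies in `C`,
so `y = t • e - (t • e - y) ∈ B(0, r) - C` whenever `‖t • e‖ < r`. Taking `t = max (s y) 0`, weak sharpness of `F`
at `p ∉ W` forces `τ · d(p, W) ≤ max (s y) 0 · ‖e‖`; as `W` is closed the left side is positive,
so `s y > 0` and `τ · d(p, W) ≤ s y · (‖e‖ + 1)`. Finally `W ⊆ W'`, so `d(p, W') ≤ d(p, W)`.
-/

open RealInnerProductSpace Pointwise Metric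

section Scalarization

variable {E : Type*} [NormedAddCommGroup E] [InnerProductSpace ℝ E] {Z : Set E} {e : E}

noncomputable def scalarization (Z : Set E) (e y : E) : ℝ :=
  sSup ((fun z => ⟪y, z⟫ / ⟪e, z⟫) '' Z)

@[simp]
theorem scalarization_zero : scalarization Z e 0 = 0 := by
  rcases Z.eq_empty_or_nonempty with rfl | hZ
  · simp [scalarization]
  · simp [scalarization, hZ.image_const]

theorem inner_le_scalarization_mul (hZ : IsCompact Z) (he : ∀ z ∈ Z, 0 < ⟪e, z⟫) (y : E)
    {z : E} (hz : z ∈ Z) : ⟪y, z⟫ ≤ scalarization Z e y * ⟪e, z⟫ := by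
  have hbdd : BddAbove ((fun z => ⟪y, z⟫ / ⟪e, z⟫) '' Z) :=
    (hZ.image_of_continuousOn <| (continuous_const.inner continuous_id).continuousOn.div
      (continuous_const.inner continuous_id).continuousOn fun z hz => (he z hz).ne').bddAbove
  rw [← div_le_iff₀ (he z hz)]
  exact le_csSup hbdd ⟨z, hz, rfl⟩

theorem smul_sub_mem_of_scalarization_le (hZ : IsCompact Z) (he : ∀ z ∈ Z, 0 < ⟪e, z⟫)
    {y : E} {t : ℝ} (ht : scalarization Z e y ≤ t) :
    t • e - y ∈ {c : E | ∀ z ∈ Z, 0 ≤ ⟪c, z⟫} := by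
  intro z hz
  rw [inner_sub_left, real_inner_smul_left, sub_nonneg]
  exact (inner_le_scalarization_mul hZ he y hz).trans
    (mul_le_mul_of_nonneg_right ht (he z hz).le)

theorem le_max_scalarization_mul_norm (hZ : IsCompact Z) (he : ∀ z ∈ Z, 0 < ⟪e, z⟫)
    {y : E} {r : ℝ} (hy : y ∉ ball (0 : E) r - {c : E | ∀ z ∈ Z, 0 ≤ ⟪c, z⟫}) :
    r ≤ max (scalarization Z e y) 0 * ‖e‖ := by
  set t := max (scalarization Z e y) 0
  by_contra! hlt
  refine hy ⟨t • e, ?_, t • e - y, smul_sub_mem_of_scalarization_le hZ he (le_max_left _ _),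
    sub_sub_cancel _ _⟩
  rwa [mem_ball_zero_iff, norm_smul, Real.norm_of_nonneg (le_max_right _ _)]

end Scalarization

theorem weak_sharp_minimum_scalarized_general {m : ℕ}
    (Z : Set (EuclideanSpace ℝ (Fin m))) (hZcomp : IsCompact Z)
    (C : Set (EuclideanSpace ℝ (Fin m)))
    (hC : C = {y : EuclideanSpace ℝ (Fin m) | ∀ z ∈ Z, 0 ≤ ⟪y, z⟫})
    (e : EuclideanSpace ℝ (Fin m)) (he : ∀ z ∈ Z, 0 < ⟪e, z⟫)
    (f : EuclideanSpace ℝ (Fin m) → ℝ)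
    (hf : ∀ y, f y = sSup ((fun z => ⟪y, z⟫ / ⟪e, z⟫) '' Z))
    {M : Type*} [MetricSpace M] (F : M → EuclideanSpace ℝ (Fin m)) (phat : M)
    (hWclosed : IsClosed {q : M | F q = F phat})
    (τ : ℝ) (hτ : 0 < τ)
    (hsharp : ∀ p : M, F p ≠ F phat →
      F p - F phat ∉
        Metric.ball (0 : EuclideanSpace ℝ (Fin m))
          (τ * Metric.infDist p {q : M | F q = F phat}) - C) :
    ∃ τ' : ℝ, 0 < τ' ∧ ∀ p : M,
      f (F p - F phat) - f (F phat - F phat) ≥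
        τ' * Metric.infDist p {q : M | f (F q - F phat) = f (F phat - F phat)} := by
  obtain rfl : f = scalarization Z e := funext hf
  subst hC
  refine ⟨τ / (‖e‖ + 1), by positivity, fun p => ?_⟩
  simp only [sub_self, scalarization_zero, sub_zero, ge_iff_le]
  by_cases hp : F p = F phat
  · rw [infDist_zero_of_mem (by simp [hp]), mul_zero, hp, sub_self, scalarization_zero]
  have hWne : {q : M | F q = F phat}.Nonempty := ⟨phat, rfl⟩
  have hd : 0 < infDist p {q : M | F q = F phat} :=
    (hWclosed.notMem_iff_infDist_pos hWne).1 hp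
  have hdd : infDist p {q : M | scalarization Z e (F q - F phat) = 0} ≤
      infDist p {q : M | F q = F phat} :=
    infDist_le_infDist_of_subset (fun q (hq : F q = F phat) => by simp [hq]) hWne
  have key := le_max_scalarization_mul_norm hZcomp he (hsharp p hp)
  have hs : 0 < scalarization Z e (F p - F phat) := by
    by_contra! hs
    rw [max_eq_right hs, zero_mul] at key
    exact (mul_pos hτ hd).not_ge key
  rw [max_eq_left hs.le] at key
  rw [div_mul_eq_mul_div, div_le_iff₀ (by positivity)]
  nlinarith [norm_nonneg e]

/-- If `p̂` is a weak sharp minimum of `F : M → ℝ^m` with respect to the cone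
`C = {y : ∀ z ∈ Z, ⟪y,z⟫ ≥ 0}` — i.e. there exists `τ > 0` such that
`F p - F p̂ ∉ B(0, τ · d(p, W)) - C` for every `p ∈ M \ W`, where
`W = {q : F q = F p̂}` is closed — then `p̂` is a weak sharp minimum of the scalarized
function `f ∘ F̃`, where `F̃ p = F p - F p̂`: there exists `τ' > 0` such that
`f (F̃ p) - f (F̃ p̂) ≥ τ' · d(p, W')` for all `p`, with
`W' = {q : f (F̃ q) = f (F̃ p̂)}`. -/
theorem weak_sharp_minimum_scalarized {m : ℕ} (hm : 1 ≤ m)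
    (Z : Set (EuclideanSpace ℝ (Fin m))) (hZne : Z.Nonempty) (hZcomp : IsCompact Z)
    (hZ0 : (0 : EuclideanSpace ℝ (Fin m)) ∉ Z)
    (C : Set (EuclideanSpace ℝ (Fin m)))
    (hC : C = {y : EuclideanSpace ℝ (Fin m) | ∀ z ∈ Z, 0 ≤ ⟪y, z⟫})
    (e : EuclideanSpace ℝ (Fin m)) (he : ∀ z ∈ Z, 0 < ⟪e, z⟫)
    (f : EuclideanSpace ℝ (Fin m) → ℝ)
    (hf : ∀ y, f y = sSup ((fun z => ⟪y, z⟫ / ⟪e, z⟫) '' Z))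
    {M : Type*} [MetricSpace M] (F : M → EuclideanSpace ℝ (Fin m)) (phat : M)
    (hWclosed : IsClosed {q : M | F q = F phat})
    (τ : ℝ) (hτ : 0 < τ)
    (hsharp : ∀ p : M, F p ≠ F phat →
      F p - F phat ∉
        Metric.ball (0 : EuclideanSpace ℝ (Fin m))
          (τ * Metric.infDist p {q : M | F q = F phat}) - C) :
    ∃ τ' : ℝ, 0 < τ' ∧ ∀ p : M,
      f (F p - F phat) - f (F phat - F phat) ≥
        τ' * Metric.infDist p {q : M | f (F q - F phat) = f (F phat - F phat)} :=
  weak_sharp_minimum_scalarized_general Z hZcomp C hC e he f hf F phat hWclosed τ hτ hsharp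
end
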